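/- Let N ≥ 2 and n_1, …, n_N ≥ 1 be integers and y⃗ = (y_1, …, y_{N−1}) ∈ {0,1}^{N−1}. Define the vector w(y⃗) on registers A_1, …, A_N, B^1, …, B^N (register block B^i consisting of n_i qubits) as follows: place |GHZ_{1+N_tot}⟩ (with N_tot = n_1 + … + n_N) on registers A_1, B^1, …, B^N, place |y_i⟩ on register A_{i+1} for i = 1, …, N−1, then apply CNOT_N to registers A_1 … A_N and apply X^{y_i} to every qubit of block B^{i+1} for each i. Then w(y⃗) = 2^{−(N−1)/2} Σ_{z ∈ {0,1}^{N−1}} (−1)^{y⃗·z⃗} |GHZ_{n_1+1}^{(z',0⃗)}⟩_{A_1 B^1} ⊗ ⊗_{i=1}^{N−1} |GHZ_{n_{i+1}+1}^{(z_i,0⃗)}⟩_{A_{i+1} B^{i+1}}, where z' = z_1 ⊕ … ⊕ z_{N−1} and y⃗·z⃗ = Σ_i y_i z_i. -/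
import Mathlib


open Matrix

/-- Basis labels for the registers `A_1, …, A_N` together with the blocks
`B¹, …, Bᴺ`, where block `Bⁱ` consists of `n i` qubits (`N = N' + 2`). -/
abbrev FullBasis (N : ℕ) (n : Fin (N + 2) → ℕ) : Type :=
  (Fin (N + 2) → Fin 2) × ((i : Fin (N + 2)) → Fin (n i) → Fin 2)

/-- Amplitude of the GHZ basis state `|GHZ_{m+1}^{(z,0⃗)}⟩ = (Z^z ⊗ I)|GHZ_{m+1}⟩`
on one qubit together with an `m`-qubit block. -/
noncomputable def ghzBasis0 (m : ℕ) (z : Fin 2) : Fin 2 × (Fin m → Fin 2) → ℂ := fun u =>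
  ((if u.1 = 0 ∧ (∀ j, u.2 j = 0) then 1 else 0) +
      (if u.1 = 1 ∧ (∀ j, u.2 j = 1) then (-1 : ℂ) ^ z.val else 0)) / (Real.sqrt 2 : ℂ)

/-- Amplitude of the big GHZ state `|GHZ_{1+N_tot}⟩` on registers `A_1, B¹, …, Bᴺ`. -/
noncomputable def ghzBig (N : ℕ) (n : Fin (N + 2) → ℕ) :
    Fin 2 × ((i : Fin (N + 2)) → Fin (n i) → Fin 2) → ℂ := fun u =>
  ((if u.1 = 0 ∧ (∀ i j, u.2 i j = 0) then 1 else 0) +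
      (if u.1 = 1 ∧ (∀ i j, u.2 i j = 1) then 1 else 0)) / (Real.sqrt 2 : ℂ)

/-- `CNOT_N ⊗ I`: `|0⟩⟨0| ⊗ I^{⊗(N-1)} + |1⟩⟨1| ⊗ X^{⊗(N-1)}` on the registers
`A_1, …, A_N` (control `A_1`), identity on all `B` blocks. -/
noncomputable def cnotA (N : ℕ) (n : Fin (N + 2) → ℕ) :
    Matrix (FullBasis N n) (FullBasis N n) ℂ :=
  Matrix.of fun p q =>
    if p.2 = q.2 ∧ p.1 0 = q.1 0 ∧ (∀ i, i ≠ 0 → p.1 i = q.1 i + q.1 0)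
    then (1 : ℂ) else 0

/-- The correction operator `⊗_{i=1}^{N-1} (X^{y_i})^{⊗ n_{i+1}}` applied to the
qubits of block `B^{i+1}` (identity on block `B¹` and on the `A` registers). -/
noncomputable def xCorr (N : ℕ) (n : Fin (N + 2) → ℕ) (y : Fin (N + 1) → Fin 2) :
    Matrix (FullBasis N n) (FullBasis N n) ℂ :=
  Matrix.of fun p q =>
    if p.1 = q.1 ∧ (∀ i j, p.2 i j = q.2 i j + (Fin.cons 0 y : Fin (N + 2) → Fin 2) i)
    then (1 : ℂ) else 0

/-- The initial state `|GHZ_{1+N_tot}⟩_{A_1 B¹ ⋯ Bᴺ} ⊗ (⊗ᵢ |y_i⟩_{A_{i+1}})`. -/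
noncomputable def initState (N : ℕ) (n : Fin (N + 2) → ℕ) (y : Fin (N + 1) → Fin 2) :
    FullBasis N n → ℂ := fun p =>
  ghzBig N n (p.1 0, p.2) *
    ∏ i : Fin (N + 1), (if p.1 i.succ = y i then (1 : ℂ) else 0)

/-- The vector `w(y⃗)`: apply `CNOT_N` to the `A` registers and `X^{y_i}` to every
qubit of block `B^{i+1}` in the state `initState N n y`. -/
noncomputable def wVec (N : ℕ) (n : Fin (N + 2) → ℕ) (y : Fin (N + 1) → Fin 2) :
    FullBasis N n → ℂ :=
  (xCorr N n y * cnotA N n).mulVec (initState N n y)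

lemma sqrt2C_ne : (Real.sqrt 2 : ℂ) ≠ 0 := by
  simp [Complex.ofReal_ne_zero]

lemma sqrt2C_sq : (Real.sqrt 2 : ℂ) ^ 2 = 2 := by
  norm_cast
  rw [Real.sq_sqrt] <;> norm_num

lemma neg_one_pow_fin_add (a b : Fin 2) :
    ((-1 : ℂ)) ^ ((a + b).val) = (-1) ^ a.val * (-1) ^ b.val := by
  rw [Fin.val_add, ← neg_one_pow_eq_pow_mod_two, pow_add]

lemma neg_one_pow_fin_sum {ι : Type*} (s : Finset ι) (f : ι → Fin 2) :
    ((-1 : ℂ)) ^ ((∑ i ∈ s, f i).val) = ∏ i ∈ s, (-1 : ℂ) ^ ((f i).val) := by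
  induction s using Finset.cons_induction with
  | empty => simp
  | cons a s ha ih => rw [Finset.sum_cons, Finset.prod_cons, neg_one_pow_fin_add, ih]

lemma perm_mulVec {α : Type*} [Fintype α] [DecidableEq α] (f : α → α) (v : α → ℂ) (p : α) :
    (Matrix.of fun p q => if q = f p then (1 : ℂ) else 0).mulVec v p = v (f p) := by
  simp [Matrix.mulVec, dotProduct]

lemma sum_g (u v w : Fin 2) :
    (∑ x : Fin 2, (-1:ℂ)^(u.val * x.val) * ((-1:ℂ)^(x.val * v.val) * (-1:ℂ)^(x.val * w.val)))
      = if w = u + v then 2 else 0 := by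
  fin_cases u <;> fin_cases v <;> fin_cases w <;> simp [Fin.sum_univ_two] <;> norm_num

lemma fin2_add_add : ∀ a b : Fin 2, a = a + b + b := by decide

lemma ghz0_eq (m : ℕ) (z : Fin 2) (a : Fin 2) (f : Fin m → Fin 2) :
    ghzBasis0 m z (a, f)
      = (if ∀ j, f j = a then (-1:ℂ) ^ (z.val * a.val) else 0) / (Real.sqrt 2 : ℂ) := by
  fin_cases a <;> simp [ghzBasis0]

lemma ghzBig_eq (N : ℕ) (n : Fin (N + 2) → ℕ) (a : Fin 2)
    (g : (i : Fin (N + 2)) → Fin (n i) → Fin 2) :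
    ghzBig N n (a, g) = (if ∀ i j, g i j = a then 1 else 0) / (Real.sqrt 2 : ℂ) := by
  fin_cases a <;> simp [ghzBig]

lemma xCorr_mulVec (N : ℕ) (n : Fin (N + 2) → ℕ) (y : Fin (N + 1) → Fin 2)
    (w : FullBasis N n → ℂ) (p : FullBasis N n) :
    (xCorr N n y).mulVec w p
      = w (p.1, fun i j => p.2 i j + (Fin.cons 0 y : Fin (N + 2) → Fin 2) i) := by
  have key : ∀ q : FullBasis N n,
      (p.1 = q.1 ∧ ∀ i j, p.2 i j = q.2 i j + (Fin.cons 0 y : Fin (N + 2) → Fin 2) i)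
        ↔ q = (p.1, fun i j => p.2 i j + (Fin.cons 0 y : Fin (N + 2) → Fin 2) i) := by
    intro q
    constructor
    · rintro ⟨h1, h2⟩
      refine Prod.ext h1.symm ?_
      funext i j
      have := h2 i j
      have h3 : ∀ a b c : Fin 2, a = b + c → b = a + c := by decide
      exact h3 _ _ _ this
    · rintro rfl
      exact ⟨rfl, fun i j => fin2_add_add _ _⟩
  simp only [Matrix.mulVec, dotProduct, xCorr, Matrix.of_apply]
  simp only [key]
  simp [ite_mul, Finset.sum_ite_eq']

lemma cnotA_mulVec (N : ℕ) (n : Fin (N + 2) → ℕ)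
    (v : FullBasis N n → ℂ) (p : FullBasis N n) :
    (cnotA N n).mulVec v p
      = v (fun i => if i = 0 then p.1 0 else p.1 i + p.1 0, p.2) := by
  have key : ∀ q : FullBasis N n,
      (p.2 = q.2 ∧ p.1 0 = q.1 0 ∧ (∀ i, i ≠ 0 → p.1 i = q.1 i + q.1 0))
        ↔ q = (fun i => if i = 0 then p.1 0 else p.1 i + p.1 0, p.2) := by
    intro q
    constructor
    · rintro ⟨h1, h2, h3⟩
      refine Prod.ext ?_ h1.symm
      funext i
      by_cases hi : i = 0
      · subst hi; simp [h2.symm]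
      · have := h3 i hi
        rw [← h2] at this
        have h4 : ∀ a b c : Fin 2, a = b + c → b = a + c := by decide
        simp only [if_neg hi]
        exact h4 _ _ _ this
    · rintro rfl
      refine ⟨rfl, by simp, fun i hi => ?_⟩
      simp only [if_neg hi, if_pos rfl]
      exact fin2_add_add _ _
  simp only [Matrix.mulVec, dotProduct, cnotA, Matrix.of_apply]
  simp only [key]
  simp [ite_mul, Finset.sum_ite_eq']

lemma wVec_apply (N : ℕ) (n : Fin (N + 2) → ℕ) (y : Fin (N + 1) → Fin 2) (p : FullBasis N n) :
    wVec N n y p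
      = initState N n y (fun i => if i = 0 then p.1 0 else p.1 i + p.1 0,
          fun i j => p.2 i j + (Fin.cons 0 y : Fin (N + 2) → Fin 2) i) := by
  rw [wVec, ← Matrix.mulVec_mulVec, xCorr_mulVec, cnotA_mulVec]


/-- **GHZ-basis decomposition of `w(y⃗)` (key lemma for Protocol 6).**
For `N ≥ 2` (written `N + 2`), block sizes `n i ≥ 1` and `y ∈ {0,1}^{N-1}`,
`w(y⃗) = 2^{-(N-1)/2} ∑_{z ∈ {0,1}^{N-1}} (-1)^{y⃗·z⃗}
  |GHZ_{n₁+1}^{(z',0⃗)}⟩_{A_1 B¹} ⊗ ⊗_{i=1}^{N-1} |GHZ_{n_{i+1}+1}^{(z_i,0⃗)}⟩_{A_{i+1} B^{i+1}}`,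
with `z' = z₁ ⊕ ⋯ ⊕ z_{N-1}` and `y⃗·z⃗ = ∑ᵢ yᵢ zᵢ`. -/
theorem wVec_ghz_decomposition (N : ℕ) (n : Fin (N + 2) → ℕ) (hn : ∀ i, 1 ≤ n i)
    (y : Fin (N + 1) → Fin 2) :
    wVec N n y
      = fun p : FullBasis N n =>
          ((Real.sqrt 2 : ℂ))⁻¹ ^ (N + 1) *
            ∑ z : Fin (N + 1) → Fin 2,
              (-1 : ℂ) ^ (∑ i, (y i).val * (z i).val) *
                (ghzBasis0 (n 0) (∑ i, z i) (p.1 0, p.2 0) *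
                  ∏ i : Fin (N + 1), ghzBasis0 (n i.succ) (z i) (p.1 i.succ, p.2 i.succ)) := by
  funext p
  rw [wVec_apply]
  simp only [initState, Fin.succ_ne_zero, ite_false, ite_true, reduceIte, ghz0_eq]
  rw [ghzBig_eq, Finset.prod_boole]
  by_cases hU : ∀ r : Fin (N + 2), ∀ j : Fin (n r), p.2 r j = p.1 r
  · -- all registers uniform
    set g : Fin (N + 1) → Fin 2 → ℂ := fun i x =>
      (-1 : ℂ) ^ ((y i).val * x.val) *
        ((-1 : ℂ) ^ (x.val * (p.1 0).val) * (-1 : ℂ) ^ (x.val * (p.1 i.succ).val)) with hg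
    have hsummand : ∀ z : Fin (N + 1) → Fin 2,
        ((-1 : ℂ) ^ ∑ i : Fin (N + 1), (y i).val * (z i).val) *
          ((if ∀ j : Fin (n 0), p.2 0 j = p.1 0
              then (-1 : ℂ) ^ ((∑ i : Fin (N + 1), z i).val * (p.1 0).val) else 0) / (Real.sqrt 2 : ℂ) *
            ∏ i : Fin (N + 1),
              (if ∀ j : Fin (n i.succ), p.2 i.succ j = p.1 i.succ
                  then (-1 : ℂ) ^ ((z i).val * (p.1 i.succ).val) else 0) / (Real.sqrt 2 : ℂ))
        = (Real.sqrt 2 : ℂ)⁻¹ * ((Real.sqrt 2 : ℂ))⁻¹ ^ (N + 1) * ∏ i : Fin (N + 1), g i (z i) := by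
      intro z
      rw [if_pos (hU 0)]
      rw [show (∏ i : Fin (N + 1),
            (if ∀ j : Fin (n i.succ), p.2 i.succ j = p.1 i.succ
                then (-1 : ℂ) ^ ((z i).val * (p.1 i.succ).val) else 0) / (Real.sqrt 2 : ℂ))
          = ∏ i : Fin (N + 1), (-1 : ℂ) ^ ((z i).val * (p.1 i.succ).val) / (Real.sqrt 2 : ℂ)
        from Finset.prod_congr rfl fun i _ => by rw [if_pos (hU i.succ)]]
      rw [Finset.prod_div_distrib, Finset.prod_const, Finset.card_univ, Fintype.card_fin]
      rw [← Finset.prod_pow_eq_pow_sum, pow_mul, neg_one_pow_fin_sum, ← Finset.prod_pow]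
      simp only [← pow_mul, hg]
      rw [Finset.prod_mul_distrib, Finset.prod_mul_distrib]
      rw [inv_pow]
      field_simp

    rw [Finset.sum_congr rfl fun z _ => hsummand z, ← Finset.mul_sum]
    have swap : (∑ z : Fin (N + 1) → Fin 2, ∏ i : Fin (N + 1), g i (z i))
        = ∏ i : Fin (N + 1), ∑ x : Fin 2, g i x := by
      rw [Finset.prod_univ_sum]; rfl
    rw [swap]
    rw [show (∏ i : Fin (N + 1), ∑ x : Fin 2, g i x)
        = ∏ i : Fin (N + 1), ((if p.1 i.succ = y i + p.1 0 then (1:ℂ) else 0) * 2)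
      from Finset.prod_congr rfl fun i _ => by
        rw [hg]; rw [sum_g (y i) (p.1 0) (p.1 i.succ)]; split <;> ring]
    rw [Finset.prod_mul_distrib, Finset.prod_boole, Finset.prod_const, Finset.card_univ,
      Fintype.card_fin]
    by_cases hD : ∀ i : Fin (N + 1), p.1 i.succ = y i + p.1 0
    · have hC2 : ∀ i ∈ Finset.univ, p.1 i.succ + p.1 0 = y i := by
        intro i _
        have h : ∀ a b c : Fin 2, a = b + c → a + c = b := by decide
        exact h _ _ _ (hD i)
      have hC1 : ∀ (i : Fin (N + 2)) (j : Fin (n i)), p.2 i j + (Fin.cons 0 y : Fin (N + 2) → Fin 2) i = p.1 0 := by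
        intro i j
        rw [hU i j]
        refine Fin.cases ?_ ?_ i
        · simp
        · intro k
          rw [Fin.cons_succ]
          have h : ∀ a b c : Fin 2, a = b + c → a + b = c := by decide
          exact h _ _ _ (hD k)
      rw [if_pos hC1, if_pos hC2, if_pos (fun i _ => hD i)]
      rw [← sqrt2C_sq, inv_pow]
      field_simp
      ring
    · have hC1' : ¬ (∀ (i : Fin (N + 2)) (j : Fin (n i)), p.2 i j + (Fin.cons 0 y : Fin (N + 2) → Fin 2) i = p.1 0) := by
        intro h
        apply hD
        intro k
        have hj : Fin (n k.succ) := ⟨0, hn k.succ⟩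
        have hk := h k.succ hj
        rw [hU k.succ hj, Fin.cons_succ] at hk
        have h4 : ∀ a b c : Fin 2, a + b = c → a = b + c := by decide
        exact h4 _ _ _ hk
      have hC3' : ¬ (∀ i ∈ Finset.univ, p.1 i.succ = y i + p.1 0) :=
        fun h => hD fun i => h i (Finset.mem_univ i)
      rw [if_neg hC1', if_neg hC3']
      ring
  · push_neg at hU
    obtain ⟨r, j0, hj⟩ := hU
    have hRHS : (∑ z : Fin (N + 1) → Fin 2,
        ((-1 : ℂ) ^ ∑ i : Fin (N + 1), (y i).val * (z i).val) *
          ((if ∀ j : Fin (n 0), p.2 0 j = p.1 0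
              then (-1 : ℂ) ^ ((∑ i : Fin (N + 1), z i).val * (p.1 0).val) else 0) / (Real.sqrt 2 : ℂ) *
            ∏ i : Fin (N + 1),
              (if ∀ j : Fin (n i.succ), p.2 i.succ j = p.1 i.succ
                  then (-1 : ℂ) ^ ((z i).val * (p.1 i.succ).val) else 0) / (Real.sqrt 2 : ℂ))) = 0 := by
      refine Finset.sum_eq_zero fun z _ => ?_
      rcases Fin.eq_zero_or_eq_succ r with rfl | ⟨k, rfl⟩
      · rw [if_neg (fun h => hj (h j0))]
        simp
      · rw [Finset.prod_eq_zero (Finset.mem_univ k)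
          (by rw [if_neg (fun h => hj (h j0))]; exact zero_div _)]
        simp
    rw [hRHS, mul_zero]
    by_cases hC2 : ∀ i ∈ Finset.univ, p.1 i.succ + p.1 0 = y i
    · have hC1' : ¬ (∀ (i : Fin (N + 2)) (j : Fin (n i)),
          p.2 i j + (Fin.cons 0 y : Fin (N + 2) → Fin 2) i = p.1 0) := by
        intro h
        apply hj
        rcases Fin.eq_zero_or_eq_succ r with rfl | ⟨k, rfl⟩
        · have h1 := h 0 j0
          simpa using h1
        · have h1 := h k.succ j0
          rw [Fin.cons_succ] at h1
          have h2 := hC2 k (Finset.mem_univ k)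
          have h4 : ∀ a b c d : Fin 2, a + d = b → c + b = d → a = c := by decide
          exact h4 _ _ _ _ h1 h2
      rw [if_neg hC1']
      ring
    · rw [if_neg hC2]
      ring
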